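/- Let D be a probability distribution on X × Y with marginal D_X, let f : X → ℝ^C be a score function with finite local Lipschitz constant L_f(D_X, ε) on D_X, and fix ρ > 0, ε > 0, p ≥ 1 (all relevant integrands measurable and integrable). Then the robust margin risk is bounded by the margin risk plus a Lipschitz correction: R^{rob,(ρ)}_D(f) ≤ R^{(ρ)}_D(f) + (2ε/ρ) L_f(D_X, ε). -/

import Mathlib

noncomputable section
open MeasureTheory Finset Set

namespace RobustUDA

/-- The input space: `ℝ^d`. -/
abbrev Inp (d : ℕ) := Fin d → ℝ

variable {d C : ℕ}

/-- `ℓ_p`-norm of a vector in `ℝ^d`. -/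
def pnorm (p : ℝ) (v : Inp d) : ℝ := (∑ i, |v i| ^ p) ^ (1 / p)

/-- The `ε`-ball centered at `x` in the `ℓ_p`-norm. -/
def ball (p ε : ℝ) (x : Inp d) : Set (Inp d) := {x' | pnorm p (fun i => x i - x' i) ≤ ε}

open Classical in
/-- Indicator function of a proposition, real valued. -/
def ind (P : Prop) : ℝ := if P then 1 else 0

/-- The ramp function `Φ_ρ`. -/
def ramp (ρ t : ℝ) : ℝ := if t ≤ 0 then 1 else if t ≤ ρ then 1 - t / ρ else 0

/-- The margin `M_f(x,y) = f_y(x) - max_{y' ≠ y} f_{y'}(x)`. -/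
def margin (f : Inp d → Fin C → ℝ) (x : Inp d) (y : Fin C) : ℝ :=
  f x y - sSup (f x '' {y' | y' ≠ y})

/-- Standard (0-1) risk of a classifier `hf` on a distribution `D` on `X × Y`. -/
def stdRisk (D : Measure (Inp d × Fin C)) (hf : Inp d → Fin C) : ℝ :=
  ∫ z, ind (z.2 ≠ hf z.1) ∂D

/-- Robust (0-1) risk of a classifier `hf`. -/
def robustRisk (p ε : ℝ) (D : Measure (Inp d × Fin C)) (hf : Inp d → Fin C) : ℝ :=
  ∫ z, sSup ((fun x' => ind (z.2 ≠ hf x')) '' ball p ε z.1) ∂D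

/-- Margin risk `R^{(ρ)}_D(f)`. -/
def marginRisk (ρ : ℝ) (D : Measure (Inp d × Fin C)) (f : Inp d → Fin C → ℝ) : ℝ :=
  ∫ z, ramp ρ (margin f z.1 z.2) ∂D

/-- Robust margin risk `R^{rob,(ρ)}_D(f)`. -/
def robustMarginRisk (p ε ρ : ℝ) (D : Measure (Inp d × Fin C)) (f : Inp d → Fin C → ℝ) : ℝ :=
  ∫ z, sSup ((fun x' => ramp ρ (margin f x' z.2)) '' ball p ε z.1) ∂D

/-- Margin disparity `disp^{(ρ)}_{D_X}(f', f)`, where `hf'` is the classifier induced by `f'`. -/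
def marginDisp (ρ : ℝ) (DX : Measure (Inp d)) (hf' : Inp d → Fin C)
    (f : Inp d → Fin C → ℝ) : ℝ :=
  ∫ x, ramp ρ (margin f x (hf' x)) ∂DX

/-- 0-1 robust disparity `disp^{rob}_{D_X}(f', f)`. -/
def robDisp (p ε : ℝ) (DX : Measure (Inp d)) (hf' hf : Inp d → Fin C) : ℝ :=
  ∫ x, sSup ((fun x' => ind (hf' x ≠ hf x')) '' ball p ε x) ∂DX

/-- Robust margin disparity `disp^{rob,(ρ)}_{D_X}(f', f)`. -/
def robMarginDisp (p ε ρ : ℝ) (DX : Measure (Inp d)) (hf' : Inp d → Fin C)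
    (f : Inp d → Fin C → ℝ) : ℝ :=
  ∫ x, sSup ((fun x' => ramp ρ (margin f x' (hf' x))) '' ball p ε x) ∂DX

/-- Point-wise local Lipschitz constant `L_f(x, ε)` (w.r.t. the `ℓ_p` ball and `ℓ₁` output norm). -/
def locLip (p ε : ℝ) (f : Inp d → Fin C → ℝ) (x : Inp d) : ℝ :=
  sSup ((fun x' => (∑ c, |f x' c - f x c|) / pnorm p (fun i => x' i - x i)) ''
    {x' | x' ∈ ball p ε x ∧ x' ≠ x})

/-- Topological support of a measure on the input space. -/
def msupport (μ : Measure (Inp d)) : Set (Inp d) :=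
  {x | ∀ U : Set (Inp d), IsOpen U → x ∈ U → 0 < μ U}

/-- Local Lipschitz constant `L_f(D_X, ε)` over the support of `D_X`. -/
def locLipOn (p ε : ℝ) (f : Inp d → Fin C → ℝ) (μ : Measure (Inp d)) : ℝ :=
  sSup (locLip p ε f '' msupport μ)

/-- Robust margin disparity discrepancy `d^{rob,(ρ)}_{f,F}(S_X, T_X)` where `cl` assigns
to each score function its induced classifier. -/
def discrepancy (p ε ρ : ℝ) (F : Set (Inp d → Fin C → ℝ))
    (cl : (Inp d → Fin C → ℝ) → Inp d → Fin C)
    (SX TX : Measure (Inp d)) (f : Inp d → Fin C → ℝ) : ℝ :=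
  sSup ((fun f' => robMarginDisp p ε ρ TX (cl f') f - marginDisp ρ SX (cl f') f) '' F)

/-- The class `Π₁F` of component functions of score functions in `F`. -/
def Pi1 (F : Set (Inp d → Fin C → ℝ)) : Set (Inp d → ℝ) :=
  {g | ∃ f ∈ F, ∃ y : Fin C, g = fun x => f x y}

/-- The class `Π_H F` where `H = {h_f : f ∈ F}` is given by the classifier assignment `cl`. -/
def PiH (F : Set (Inp d → Fin C → ℝ)) (cl : (Inp d → Fin C → ℝ) → Inp d → Fin C) :
    Set (Inp d → ℝ) :=
  {g | ∃ f ∈ F, ∃ f' ∈ F, g = fun x => f x (cl f' x)}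

/-- Rademacher complexity `ℜ_{n,D}(G)` of a class `G` of real functions on `Z`. -/
def rademacher (n : ℕ) {Z : Type*} [MeasurableSpace Z] (D : Measure Z) (G : Set (Z → ℝ)) : ℝ :=
  ∫ z : Fin n → Z, ∫ σ : Fin n → Bool,
      sSup ((fun g => (n : ℝ)⁻¹ * ∑ i, (if σ i then (1 : ℝ) else -1) * g (z i)) '' G)
    ∂(Measure.pi fun _ => (PMF.uniformOfFintype Bool).toMeasure) ∂(Measure.pi fun _ => D)



section Aux

lemma pnorm_nonneg (p : ℝ) (v : Inp d) : 0 ≤ pnorm p v :=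
  Real.rpow_nonneg (Finset.sum_nonneg fun i _ => Real.rpow_nonneg (abs_nonneg _) p) _

lemma pnorm_pos {p : ℝ} (hp : 1 ≤ p) {v : Inp d} (hv : v ≠ 0) : 0 < pnorm p v := by
  obtain ⟨i, hi⟩ : ∃ i, v i ≠ 0 := by
    by_contra h; push_neg at h; exact hv (funext h)
  have hsum : 0 < ∑ i, |v i| ^ p :=
    Finset.sum_pos' (fun j _ => Real.rpow_nonneg (abs_nonneg _) p)
      ⟨i, Finset.mem_univ i, Real.rpow_pos_of_pos (abs_pos.2 hi) p⟩
  exact Real.rpow_pos_of_pos hsum _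

lemma pnorm_symm (p : ℝ) (x x' : Inp d) :
    pnorm p (fun i => x i - x' i) = pnorm p (fun i => x' i - x i) := by
  simp only [pnorm, abs_sub_comm]

lemma self_mem_ball {p ε : ℝ} (hε : 0 < ε) (hp : 1 ≤ p) (x : Inp d) : x ∈ ball p ε x := by
  have hp0 : p ≠ 0 := by positivity
  have h2 : p⁻¹ ≠ 0 := inv_ne_zero hp0
  have : pnorm p (fun i => x i - x i) = 0 := by
    simp [pnorm, Real.zero_rpow hp0, one_div, Real.zero_rpow h2]
  simp only [ball, Set.mem_setOf_eq, this]
  exact hε.le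

lemma ramp_nonneg {ρ : ℝ} (hρ : 0 < ρ) (t : ℝ) : 0 ≤ ramp ρ t := by
  unfold ramp; split_ifs with h1 h2
  · norm_num
  · push_neg at h1
    have : t / ρ ≤ 1 := (div_le_one hρ).2 h2
    linarith
  · exact le_refl _

lemma ramp_lip {ρ : ℝ} (hρ : 0 < ρ) (a b : ℝ) : ramp ρ a ≤ ramp ρ b + |a - b| / ρ := by
  have f1 : a / ρ * ρ = a := div_mul_cancel₀ a hρ.ne'
  have f2 : b / ρ * ρ = b := div_mul_cancel₀ b hρ.ne'
  have f3 : |a - b| / ρ * ρ = |a - b| := div_mul_cancel₀ _ hρ.ne'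
  have h1 : (0:ℝ) ≤ |a - b| := abs_nonneg _
  have h2 : a - b ≤ |a - b| := le_abs_self _
  have h3 : b - a ≤ |a - b| := by rw [abs_sub_comm]; exact le_abs_self _
  unfold ramp
  split_ifs <;> nlinarith [f1, f2, f3, h1, h2, h3, hρ]

lemma margin_sub_le (hC : 2 ≤ C) (f : Inp d → Fin C → ℝ) (u v : Inp d) (y : Fin C) :
    margin f u y - margin f v y ≤ ∑ c, |f u c - f v c| := by
  have hcard : 1 < Fintype.card (Fin C) := by
    rw [Fintype.card_fin]; omega
  have hS : ({y' : Fin C | y' ≠ y}).Nonempty := by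
    obtain ⟨b, hb⟩ := Fintype.exists_ne_of_one_lt_card hcard y
    exact ⟨b, hb⟩
  have hfinu : (f u '' {y' | y' ≠ y}).Finite := (Set.toFinite _).image _
  have hfinv : (f v '' {y' | y' ≠ y}).Finite := (Set.toFinite _).image _
  obtain ⟨y0, hy0, hy0eq⟩ : ∃ y0 ∈ {y' : Fin C | y' ≠ y},
      f v y0 = sSup (f v '' {y' | y' ≠ y}) := by
    have hmem := (hS.image (f v)).csSup_mem hfinv
    obtain ⟨y0, hy0, h⟩ := hmem
    exact ⟨y0, hy0, h⟩
  have hle : f u y0 ≤ sSup (f u '' {y' | y' ≠ y}) :=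
    le_csSup hfinu.bddAbove (Set.mem_image_of_mem _ hy0)
  have hpair : |f u y - f v y| + |f u y0 - f v y0| ≤ ∑ c, |f u c - f v c| := by
    have hne : y ≠ y0 := Ne.symm hy0
    calc |f u y - f v y| + |f u y0 - f v y0|
        = ∑ c ∈ ({y, y0} : Finset (Fin C)), |f u c - f v c| := by rw [Finset.sum_pair hne]
      _ ≤ ∑ c, |f u c - f v c| :=
          Finset.sum_le_sum_of_subset_of_nonneg (Finset.subset_univ _)
            (fun _ _ _ => abs_nonneg _)
  have h1 : f u y - f v y ≤ |f u y - f v y| := le_abs_self _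
  have h2 : f v y0 - f u y0 ≤ |f u y0 - f v y0| := by
    rw [abs_sub_comm]; exact le_abs_self _
  unfold margin
  linarith

lemma abs_margin_sub_le (hC : 2 ≤ C) (f : Inp d → Fin C → ℝ) (u v : Inp d) (y : Fin C) :
    |margin f u y - margin f v y| ≤ ∑ c, |f u c - f v c| := by
  rw [abs_sub_le_iff]
  refine ⟨margin_sub_le hC f u v y, ?_⟩
  have h := margin_sub_le hC f v u y
  calc margin f v y - margin f u y ≤ ∑ c, |f v c - f u c| := h
    _ = ∑ c, |f u c - f v c| := by simp [abs_sub_comm]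

end Aux

/-- The robust margin risk is bounded by the margin risk plus a Lipschitz
correction: `R^{rob,(ρ)}_D(f) ≤ R^{(ρ)}_D(f) + (2ε/ρ) L_f(D_X, ε)`. -/
theorem robustMarginRisk_le_marginRisk_add_lipschitz {d C : ℕ} (hC : 2 ≤ C)
    (ρ ε p : ℝ) (hρ : 0 < ρ) (hε : 0 < ε) (hp : 1 ≤ p)
    (D : Measure (Inp d × Fin C)) [IsProbabilityMeasure D]
    (f : Inp d → Fin C → ℝ)
    (hLfin : BddAbove (locLip p ε f '' msupport (D.map Prod.fst)))
    (hLptfin : ∀ x ∈ msupport (D.map Prod.fst), BddAbove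
      ((fun x' => (∑ c, |f x' c - f x c|) / pnorm p (fun i => x' i - x i)) ''
        {x' | x' ∈ ball p ε x ∧ x' ≠ x}))
    (hint1 : Integrable
      (fun z => sSup ((fun x' => ramp ρ (margin f x' z.2)) '' ball p ε z.1)) D)
    (hint2 : Integrable (fun z => ramp ρ (margin f z.1 z.2)) D) :
    robustMarginRisk p ε ρ D f ≤
      marginRisk ρ D f + (2 * ε / ρ) * locLipOn p ε f (D.map Prod.fst) := by
  classical
  set μ := D.map Prod.fst with hμdef
  set L := locLipOn p ε f μ with hLdef
  have hL0 : 0 ≤ L := by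
    apply Real.sSup_nonneg
    rintro r ⟨x, hx, rfl⟩
    apply Real.sSup_nonneg
    rintro s ⟨x', hx', rfl⟩
    exact div_nonneg (Finset.sum_nonneg fun _ _ => abs_nonneg _) (pnorm_nonneg _ _)
  have hconst : 0 ≤ 2 * ε / ρ * L :=
    mul_nonneg (by positivity) hL0
  have hopen : IsOpen (msupport μ)ᶜ := by
    rw [isOpen_iff_forall_mem_open]
    intro x hx
    have hx' : ¬ ∀ U : Set (Inp d), IsOpen U → x ∈ U → 0 < μ U := hx
    push_neg at hx'
    obtain ⟨U, hU, hxU, hU0⟩ := hx'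
    refine ⟨U, fun y hy hmem => ?_, hU, hxU⟩
    exact absurd (hmem U hU hy) (not_lt.2 hU0)
  have hnull : μ (msupport μ)ᶜ = 0 := by
    apply measure_null_of_locally_null
    intro x hx
    have hx' : ¬ ∀ U : Set (Inp d), IsOpen U → x ∈ U → 0 < μ U := hx
    push_neg at hx'
    obtain ⟨U, hU, hxU, hU0⟩ := hx'
    exact ⟨U, mem_nhdsWithin_of_mem_nhds (hU.mem_nhds hxU),
      le_antisymm hU0 zero_le⟩
  have haess : ∀ᵐ z ∂D, z.1 ∈ msupport μ := by
    rw [ae_iff]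
    have hset : {z : Inp d × Fin C | ¬ z.1 ∈ msupport μ} = Prod.fst ⁻¹' (msupport μ)ᶜ := rfl
    rw [hset, ← Measure.map_apply measurable_fst hopen.measurableSet, ← hμdef]
    exact hnull
  have hpt : ∀ z : Inp d × Fin C, z.1 ∈ msupport μ →
      sSup ((fun x' => ramp ρ (margin f x' z.2)) '' ball p ε z.1)
        ≤ ramp ρ (margin f z.1 z.2) + 2 * ε / ρ * L := by
    rintro ⟨x, y⟩ hx
    apply csSup_le (Set.Nonempty.image _ ⟨x, self_mem_ball hε hp x⟩)
    rintro r ⟨x', hx', rfl⟩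
    by_cases hxx : x' = x
    · subst hxx; simp only
      linarith
    · have hq : 0 < pnorm p (fun i => x' i - x i) := by
        apply pnorm_pos hp
        intro h0
        apply hxx; funext i
        have h1 := congrFun h0 i
        simpa [sub_eq_zero] using h1
      have hqε : pnorm p (fun i => x' i - x i) ≤ ε := pnorm_symm p x x' ▸ hx'
      have hratio : (∑ c, |f x' c - f x c|) / pnorm p (fun i => x' i - x i)
          ≤ locLip p ε f x :=
        le_csSup (hLptfin x hx) ⟨x', ⟨hx', hxx⟩, rfl⟩
      have hlocle : locLip p ε f x ≤ L := le_csSup hLfin ⟨x, hx, rfl⟩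
      have hsum : (∑ c, |f x' c - f x c|) ≤ L * ε := by
        calc (∑ c, |f x' c - f x c|)
            = (∑ c, |f x' c - f x c|) / pnorm p (fun i => x' i - x i)
                * pnorm p (fun i => x' i - x i) := (div_mul_cancel₀ _ hq.ne').symm
          _ ≤ locLip p ε f x * pnorm p (fun i => x' i - x i) :=
              mul_le_mul_of_nonneg_right hratio hq.le
          _ ≤ L * ε := mul_le_mul hlocle hqε (pnorm_nonneg _ _) hL0
      have hmid : 0 ≤ ε / ρ * L := mul_nonneg (by positivity) hL0
      calc ramp ρ (margin f x' y)
          ≤ ramp ρ (margin f x y) + |margin f x' y - margin f x y| / ρ := ramp_lip hρ _ _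
        _ ≤ ramp ρ (margin f x y) + (∑ c, |f x' c - f x c|) / ρ := by
            gcongr
            exact abs_margin_sub_le hC f x' x y
        _ ≤ ramp ρ (margin f x y) + (L * ε) / ρ := by gcongr
        _ ≤ ramp ρ (margin f x y) + 2 * ε / ρ * L := by
            have heq : 2 * ε / ρ * L - L * ε / ρ = ε / ρ * L := by ring
            linarith
  have hmono : ∀ᵐ z ∂D, sSup ((fun x' => ramp ρ (margin f x' z.2)) '' ball p ε z.1)
      ≤ ramp ρ (margin f z.1 z.2) + 2 * ε / ρ * L :=
    haess.mono fun z hz => hpt z hz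
  have hint3 : Integrable
      (fun z : Inp d × Fin C => ramp ρ (margin f z.1 z.2) + 2 * ε / ρ * L) D :=
    hint2.add (integrable_const _)
  have hineq := integral_mono_ae hint1 hint3 hmono
  rw [integral_add hint2 (integrable_const _), integral_const] at hineq
  simp only [measure_univ, ENNReal.toReal_one, probReal_univ, one_smul] at hineq
  unfold robustMarginRisk marginRisk
  exact hineq


end RobustUDA
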